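/- Every smooth vector field v on ℝ³ that is an infinitesimal symmetry of the parabolic system Σ_P has the form v(x,y,w) = (2a·x + b, a·y + c, a·w) for some real constants a, b, c; equivalently, the Lie algebra of infinitesimal symmetries of Σ_P is exactly the real linear span of the vector fields (1,0,0), (0,1,0), and (2x, y, w). -/

import Mathlib

open Real Set
open ContinuousLinearMap

/-- The state space ℝ³ with coordinates (x, y, w). -/
abbrev V3 : Type := Fin 3 → ℝ

/-- Lie bracket of vector fields: [v,u](ξ) = Du(ξ)·v(ξ) − Dv(ξ)·u(ξ). -/
noncomputable def lieBr (v u : V3 → V3) : V3 → V3 :=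
  fun ξ => fderiv ℝ u ξ (v ξ) - fderiv ℝ v ξ (u ξ)

/-- `v` is an infinitesimal symmetry of the control-affine system `(f, g)` on `U`. -/
def InfSymmOn (U : Set V3) (f g v : V3 → V3) : Prop :=
  ∀ ξ ∈ U, (∃ c : ℝ, lieBr v g ξ = c • g ξ) ∧ (∃ c : ℝ, lieBr v f ξ = c • g ξ)

/-- The control vector field g₀ = ∂/∂w. -/
def g0 : V3 → V3 := fun _ => ![0, 0, 1]

/-- Drift of the parabolic system Σ_P. -/
noncomputable def fP : V3 → V3 := fun ξ => ![(ξ 2) ^ 2, ξ 2, 0]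

/-! ### Auxiliary machinery -/

noncomputable def ee (i : Fin 3) : V3 := Pi.single i 1

lemma ee_apply (i j : Fin 3) : ee i j = if j = i then 1 else 0 := by
  simp [ee, Pi.single_apply]

lemma decompV3 (u : V3) : u = u 0 • ee 0 + u 1 • ee 1 + u 2 • ee 2 := by
  funext j; fin_cases j <;> simp [ee_apply]

/-- constancy along a direction with zero directional derivative -/
lemma line_const (f : V3 → ℝ) (hf : Differentiable ℝ f) (i : Fin 3)
    (h : ∀ ξ, fderiv ℝ f ξ (ee i) = 0) (η : V3) (c : ℝ) :
    f (η + c • ee i) = f η := by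
  have hline : ∀ t : ℝ, HasDerivAt (fun t : ℝ => η + t • ee i) (ee i) t := by
    intro t
    simpa using ((hasDerivAt_id t).smul_const (ee i)).const_add η
  have hg : ∀ t : ℝ, HasDerivAt (fun t : ℝ => f (η + t • ee i)) 0 t := by
    intro t
    have := (hf (η + t • ee i)).hasFDerivAt.comp_hasDerivAt t (hline t)
    exact (by simpa [h] using this : HasDerivAt (f ∘ fun t : ℝ => η + t • ee i) 0 t)
  have := is_const_of_deriv_eq_zero (f := fun t : ℝ => f (η + t • ee i))
    (fun t => (hg t).differentiableAt) (fun t => (hg t).deriv) c 0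
  simpa using this

/-- derivative identity when f factors through a CLM -/
lemma fderiv_factor (f : V3 → ℝ) (hf : Differentiable ℝ f) (P : V3 →L[ℝ] V3)
    (hfP : ∀ ξ, f (P ξ) = f ξ) (u : V3) (hu : P u = u) (ξ : V3) :
    fderiv ℝ f ξ u = fderiv ℝ f (P ξ) u := by
  have hcomp : f = f ∘ P := by funext ζ; simp [Function.comp, hfP ζ]
  conv_lhs => rw [hcomp]
  rw [fderiv_comp ξ (hf _) P.differentiableAt, P.fderiv]
  simp [hu]

lemma hasFDerivAt_fP (ξ : V3) :
    HasFDerivAt fP (pi (![(ξ 2) • proj 2 + (ξ 2) • proj 2, proj 2, 0] :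
      Fin 3 → (V3 →L[ℝ] ℝ))) ξ := by
  refine hasFDerivAt_pi'' ?_
  intro i
  have h2 : HasFDerivAt (fun x : V3 => x 2) (proj 2 : V3 →L[ℝ] ℝ) ξ := hasFDerivAt_apply 2 ξ
  fin_cases i
  · simp only [fP, proj_pi, Matrix.cons_val_zero, Fin.isValue]
    exact (h2.mul h2).congr_of_eventuallyEq (Filter.Eventually.of_forall fun x => by simp; ring)
  · exact h2
  · exact hasFDerivAt_const (0:ℝ) ξ

lemma fderiv_fP_apply (ξ u : V3) :
    fderiv ℝ fP ξ u = ![2 * ξ 2 * u 2, u 2, 0] := by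
  rw [(hasFDerivAt_fP ξ).fderiv]
  funext i; fin_cases i <;> simp <;> ring

lemma fderiv_comp_apply (v : V3 → V3) (hv : Differentiable ℝ v) (i : Fin 3) (ξ u : V3) :
    fderiv ℝ (fun ζ => v ζ i) ξ u = fderiv ℝ v ξ u i := by
  have := hasFDerivAt_pi'.1 (hv ξ).hasFDerivAt i
  rw [this.fderiv]; rfl

lemma diff_comp (v : V3 → V3) (hv : Differentiable ℝ v) (i : Fin 3) :
    Differentiable ℝ (fun ζ => v ζ i) := by
  intro ξ
  exact (hasFDerivAt_pi'.1 (hv ξ).hasFDerivAt i).differentiableAt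

/-- affine reconstruction from constant directional derivatives -/
lemma affine_of_derivs (f : V3 → ℝ) (hf : Differentiable ℝ f) (k : Fin 3) (c : ℝ)
    (h : ∀ ξ j, fderiv ℝ f ξ (ee j) = if j = k then c else 0) :
    ∀ ξ, f ξ = c * ξ k + f 0 := by
  have hxk : ∀ ξ : V3, HasFDerivAt (fun x : V3 => c * x k) (c • (proj k : V3 →L[ℝ] ℝ)) ξ :=
    fun ξ => (hasFDerivAt_apply k ξ).const_mul c
  set g : V3 → ℝ := fun ξ => f ξ - c * ξ k with hgdef
  have hg : ∀ ξ : V3, HasFDerivAt g (fderiv ℝ f ξ - c • (proj k : V3 →L[ℝ] ℝ)) ξ :=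
    fun ξ => (hf ξ).hasFDerivAt.sub (hxk ξ)
  have hg0 : ∀ ξ : V3, fderiv ℝ g ξ = 0 := by
    intro ξ
    rw [(hg ξ).fderiv]
    apply ContinuousLinearMap.ext
    intro u
    have hu : fderiv ℝ f ξ u = c * u k := by
      conv_lhs => rw [decompV3 u]
      rw [map_add, map_add, map_smul, map_smul, map_smul, h ξ 0, h ξ 1, h ξ 2]
      fin_cases k <;> simp <;> ring
    simp [hu]
  have := is_const_of_fderiv_eq_zero (fun ξ => (hg ξ).differentiableAt) hg0
  intro ξ
  have h2 := this ξ 0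
  simp only [hgdef, Pi.zero_apply, mul_zero, sub_zero] at h2
  linarith

/-- the Lie algebra of infinitesimal symmetries of Σ_P is exactly the real
linear span of (1,0,0), (0,1,0), (2x,y,w): every smooth infinitesimal symmetry has the
form v(x,y,w) = (2a·x + b, a·y + c, a·w), and conversely. -/
theorem symmetry_algebra_of_parabolic :
    {v : V3 → V3 | ContDiff ℝ (⊤ : ℕ∞) v ∧ InfSymmOn univ fP g0 v} =
      {v : V3 → V3 | ∃ a b c : ℝ, v = fun ξ => ![2 * a * ξ 0 + b, a * ξ 1 + c, a * ξ 2]} := by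
  ext v
  simp only [mem_setOf_eq]
  constructor
  · rintro ⟨hv, hs⟩
    have hdv : Differentiable ℝ v := hv.differentiable (by simp)
    -- Step A : first two components do not depend on w
    have hA0 : ∀ ξ : V3, fderiv ℝ v ξ (ee 2) 0 = 0 := by
      intro ξ
      obtain ⟨c, hc⟩ := (hs ξ (mem_univ ξ)).1
      have hg : fderiv ℝ g0 ξ = 0 := fderiv_const_apply _
      have he : g0 ξ = ee 2 := by funext j; fin_cases j <;> simp [g0, ee_apply]
      unfold lieBr at hc
      rw [hg, he] at hc
      have := congrFun hc 0
      simp [ee_apply] at this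
      linarith
    have hA1 : ∀ ξ : V3, fderiv ℝ v ξ (ee 2) 1 = 0 := by
      intro ξ
      obtain ⟨c, hc⟩ := (hs ξ (mem_univ ξ)).1
      have hg : fderiv ℝ g0 ξ = 0 := fderiv_const_apply _
      have he : g0 ξ = ee 2 := by funext j; fin_cases j <;> simp [g0, ee_apply]
      unfold lieBr at hc
      rw [hg, he] at hc
      have := congrFun hc 1
      simp [ee_apply] at this
      linarith
    -- Step B : the two scalar equations from the bracket with fP
    have hB : ∀ ξ : V3,
        2 * ξ 2 * v ξ 2 = (ξ 2)^2 * fderiv ℝ v ξ (ee 0) 0 + ξ 2 * fderiv ℝ v ξ (ee 1) 0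
      ∧ v ξ 2 = (ξ 2)^2 * fderiv ℝ v ξ (ee 0) 1 + ξ 2 * fderiv ℝ v ξ (ee 1) 1 := by
      intro ξ
      obtain ⟨c, hc⟩ := (hs ξ (mem_univ ξ)).2
      unfold lieBr at hc
      rw [fderiv_fP_apply] at hc
      have hfPd : fP ξ = (ξ 2)^2 • ee 0 + (ξ 2) • ee 1 := by
        funext j; fin_cases j <;> simp [fP, ee_apply]
      rw [hfPd, map_add, map_smul, map_smul] at hc
      constructor
      · have := congrFun hc 0
        simp [g0, ee_apply] at this
        linarith
      · have := congrFun hc 1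
        simp [g0, ee_apply] at this
        linarith
    -- projection killing the w coordinate
    set P2 : V3 →L[ℝ] V3 := ContinuousLinearMap.id ℝ V3 - (proj 2).smulRight (ee 2) with hP2def
    have hP2 : ∀ ξ : V3, P2 ξ = ![ξ 0, ξ 1, 0] := by
      intro ξ; funext j; fin_cases j <;> simp [hP2def, ee_apply]
    have hP2e0 : P2 (ee 0) = ee 0 := by
      rw [hP2]; funext j; fin_cases j <;> simp [ee_apply]
    have hP2e1 : P2 (ee 1) = ee 1 := by
      rw [hP2]; funext j; fin_cases j <;> simp [ee_apply]
    have hfact : ∀ i : Fin 3, (∀ ζ : V3, fderiv ℝ v ζ (ee 2) i = 0) →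
        ∀ ξ : V3, v (P2 ξ) i = v ξ i := by
      intro i hzero ξ
      have hz : ∀ ζ, fderiv ℝ (fun ζ => v ζ i) ζ (ee 2) = 0 := fun ζ => by
        rw [fderiv_comp_apply v hdv]; exact hzero ζ
      have hl := line_const _ (diff_comp v hdv i) 2 hz (P2 ξ) (ξ 2)
      have heq : P2 ξ + ξ 2 • ee 2 = ξ := by
        rw [hP2]; funext j; fin_cases j <;> simp [ee_apply]
      rw [heq] at hl
      exact hl.symm
    have hfd : ∀ i j : Fin 3, (∀ ζ : V3, fderiv ℝ v ζ (ee 2) i = 0) → P2 (ee j) = ee j →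
        ∀ ξ : V3, fderiv ℝ v ξ (ee j) i = fderiv ℝ v (P2 ξ) (ee j) i := by
      intro i j hzero hu ξ
      have := fderiv_factor (fun ζ => v ζ i) (diff_comp v hdv i) P2
        (hfact i hzero) (ee j) hu ξ
      rwa [fderiv_comp_apply v hdv, fderiv_comp_apply v hdv] at this
    -- Step D : polynomial identities in w
    have key : ∀ x y : ℝ,
        fderiv ℝ v ![x, y, (0:ℝ)] (ee 0) 1 = 0
      ∧ fderiv ℝ v ![x, y, (0:ℝ)] (ee 1) 0 = 0
      ∧ fderiv ℝ v ![x, y, (0:ℝ)] (ee 0) 0 = 2 * fderiv ℝ v ![x, y, (0:ℝ)] (ee 1) 1 := by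
      intro x y
      set A := fderiv ℝ v ![x, y, (0:ℝ)] (ee 0) 0 with hA
      set B := fderiv ℝ v ![x, y, (0:ℝ)] (ee 1) 0 with hBd
      set C := fderiv ℝ v ![x, y, (0:ℝ)] (ee 0) 1 with hC
      set D := fderiv ℝ v ![x, y, (0:ℝ)] (ee 1) 1 with hD
      have hpt : ∀ w : ℝ, P2 (![x, y, w] : V3) = ![x, y, (0:ℝ)] := by
        intro w; rw [hP2]; simp
      have hw2 : ∀ w : ℝ, (![x, y, w] : V3) 2 = w := by intro w; simp
      have hveq : ∀ w : ℝ, v ![x, y, w] 2 = w^2 * C + w * D := by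
        intro w
        have h := (hB ![x, y, w]).2
        rw [hfd 1 0 hA1 hP2e0, hfd 1 1 hA1 hP2e1, hpt w, hw2 w] at h
        exact h
      have hmain : ∀ w : ℝ, 2 * w * (w^2 * C + w * D) = w^2 * A + w * B := by
        intro w
        have h := (hB ![x, y, w]).1
        rw [hfd 0 0 hA0 hP2e0, hfd 0 1 hA0 hP2e1, hpt w, hw2 w, hveq w] at h
        exact h
      have h1 := hmain 1
      have h2 := hmain (-1)
      have h3 := hmain 2
      have h4 := hmain (-2)
      norm_num at h1 h2 h3 h4
      refine ⟨by linarith, by linarith, by linarith⟩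
    -- Step E : global pointwise facts
    have hD10 : ∀ ξ : V3, fderiv ℝ v ξ (ee 0) 1 = 0 := by
      intro ξ
      rw [hfd 1 0 hA1 hP2e0 ξ, hP2 ξ]
      exact (key (ξ 0) (ξ 1)).1
    have hD01 : ∀ ξ : V3, fderiv ℝ v ξ (ee 1) 0 = 0 := by
      intro ξ
      rw [hfd 0 1 hA0 hP2e1 ξ, hP2 ξ]
      exact (key (ξ 0) (ξ 1)).2.1
    have hD00 : ∀ ξ : V3, fderiv ℝ v ξ (ee 0) 0 = 2 * fderiv ℝ v ξ (ee 1) 1 := by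
      intro ξ
      rw [hfd 0 0 hA0 hP2e0 ξ, hfd 1 1 hA1 hP2e1 ξ, hP2 ξ]
      exact (key (ξ 0) (ξ 1)).2.2
    have hv2 : ∀ ξ : V3, v ξ 2 = ξ 2 * fderiv ℝ v ξ (ee 1) 1 := by
      intro ξ
      have h := (hB ξ).2
      rw [hD10 ξ] at h
      simpa using h
    -- Step F : the coefficient is constant
    have hQ1fact : ∀ ξ : V3, v ![0, ξ 1, (0:ℝ)] 1 = v ξ 1 := by
      intro ξ
      have hz0 : ∀ ζ, fderiv ℝ (fun ζ => v ζ 1) ζ (ee 0) = 0 := fun ζ => by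
        rw [fderiv_comp_apply v hdv]; exact hD10 ζ
      have hz2 : ∀ ζ, fderiv ℝ (fun ζ => v ζ 1) ζ (ee 2) = 0 := fun ζ => by
        rw [fderiv_comp_apply v hdv]; exact hA1 ζ
      have s1 := line_const _ (diff_comp v hdv 1) 0 hz0 ![0, ξ 1, ξ 2] (ξ 0)
      have s2 := line_const _ (diff_comp v hdv 1) 2 hz2 ![0, ξ 1, (0:ℝ)] (ξ 2)
      have e1 : (![0, ξ 1, ξ 2] : V3) + ξ 0 • ee 0 = ξ := by
        funext j; fin_cases j <;> simp [ee_apply]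
      have e2 : (![0, ξ 1, (0:ℝ)] : V3) + ξ 2 • ee 2 = ![0, ξ 1, ξ 2] := by
        funext j; fin_cases j <;> simp [ee_apply]
      rw [e1] at s1
      rw [e2] at s2
      exact (s1.trans s2).symm
    have hQ0fact : ∀ ξ : V3, v ![ξ 0, 0, (0:ℝ)] 0 = v ξ 0 := by
      intro ξ
      have hz1 : ∀ ζ, fderiv ℝ (fun ζ => v ζ 0) ζ (ee 1) = 0 := fun ζ => by
        rw [fderiv_comp_apply v hdv]; exact hD01 ζ
      have hz2 : ∀ ζ, fderiv ℝ (fun ζ => v ζ 0) ζ (ee 2) = 0 := fun ζ => by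
        rw [fderiv_comp_apply v hdv]; exact hA0 ζ
      have s1 := line_const _ (diff_comp v hdv 0) 1 hz1 ![ξ 0, 0, ξ 2] (ξ 1)
      have s2 := line_const _ (diff_comp v hdv 0) 2 hz2 ![ξ 0, 0, (0:ℝ)] (ξ 2)
      have e1 : (![ξ 0, 0, ξ 2] : V3) + ξ 1 • ee 1 = ξ := by
        funext j; fin_cases j <;> simp [ee_apply]
      have e2 : (![ξ 0, 0, (0:ℝ)] : V3) + ξ 2 • ee 2 = ![ξ 0, 0, ξ 2] := by
        funext j; fin_cases j <;> simp [ee_apply]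
      rw [e1] at s1
      rw [e2] at s2
      exact (s1.trans s2).symm
    set Q1 : V3 →L[ℝ] V3 := (proj 1).smulRight (ee 1) with hQ1def
    have hQ1 : ∀ ξ : V3, Q1 ξ = ![0, ξ 1, (0:ℝ)] := by
      intro ξ; funext j; fin_cases j <;> simp [hQ1def, ee_apply]
    have hQ1e1 : Q1 (ee 1) = ee 1 := by
      rw [hQ1]; funext j; fin_cases j <;> simp [ee_apply]
    set Q0 : V3 →L[ℝ] V3 := (proj 0).smulRight (ee 0) with hQ0def
    have hQ0 : ∀ ξ : V3, Q0 ξ = ![ξ 0, 0, (0:ℝ)] := by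
      intro ξ; funext j; fin_cases j <;> simp [hQ0def, ee_apply]
    have hQ0e0 : Q0 (ee 0) = ee 0 := by
      rw [hQ0]; funext j; fin_cases j <;> simp [ee_apply]
    have hD11dep : ∀ ξ : V3, fderiv ℝ v ξ (ee 1) 1 = fderiv ℝ v ![0, ξ 1, (0:ℝ)] (ee 1) 1 := by
      intro ξ
      have := fderiv_factor (fun ζ => v ζ 1) (diff_comp v hdv 1) Q1
        (fun ζ => by rw [hQ1 ζ]; exact hQ1fact ζ) (ee 1) hQ1e1 ξ
      rw [fderiv_comp_apply v hdv, fderiv_comp_apply v hdv, hQ1 ξ] at this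
      exact this
    have hD00dep : ∀ ξ : V3, fderiv ℝ v ξ (ee 0) 0 = fderiv ℝ v ![ξ 0, 0, (0:ℝ)] (ee 0) 0 := by
      intro ξ
      have := fderiv_factor (fun ζ => v ζ 0) (diff_comp v hdv 0) Q0
        (fun ζ => by rw [hQ0 ζ]; exact hQ0fact ζ) (ee 0) hQ0e0 ξ
      rw [fderiv_comp_apply v hdv, fderiv_comp_apply v hdv, hQ0 ξ] at this
      exact this
    set a : ℝ := fderiv ℝ v ![0, 0, (0:ℝ)] (ee 1) 1 with hadef
    have hD11const : ∀ ξ : V3, fderiv ℝ v ξ (ee 1) 1 = a := by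
      intro ξ
      have step1 : fderiv ℝ v ![0, ξ 1, (0:ℝ)] (ee 0) 0 = fderiv ℝ v ![0, 0, (0:ℝ)] (ee 0) 0 := by
        have := hD00dep (![0, ξ 1, (0:ℝ)] : V3)
        simpa using this
      have h1 := hD00 (![0, ξ 1, (0:ℝ)] : V3)
      have h2 := hD00 (![0, 0, (0:ℝ)] : V3)
      rw [hD11dep ξ]
      rw [hadef]
      rw [step1, h2] at h1
      linarith
    have hD00const : ∀ ξ : V3, fderiv ℝ v ξ (ee 0) 0 = 2 * a := by
      intro ξ; rw [hD00 ξ, hD11const ξ]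
    -- Step G : reconstruction
    have h0 : ∀ ξ : V3, v ξ 0 = 2 * a * ξ 0 + v 0 0 := by
      have := affine_of_derivs (fun ζ => v ζ 0) (diff_comp v hdv 0) 0 (2 * a) ?_
      · exact this
      · intro ξ j
        rw [fderiv_comp_apply v hdv]
        fin_cases j <;> simp [hD00const ξ, hD01 ξ, hA0 ξ]
    have h1 : ∀ ξ : V3, v ξ 1 = a * ξ 1 + v 0 1 := by
      have := affine_of_derivs (fun ζ => v ζ 1) (diff_comp v hdv 1) 1 a ?_
      · exact this
      · intro ξ j
        rw [fderiv_comp_apply v hdv]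
        fin_cases j <;> simp [hD11const ξ, hD10 ξ, hA1 ξ]
    have h2 : ∀ ξ : V3, v ξ 2 = a * ξ 2 := by
      intro ξ; rw [hv2 ξ, hD11const ξ]; ring
    refine ⟨a, v 0 0, v 0 1, ?_⟩
    funext ξ
    funext i
    fin_cases i
    · simpa using h0 ξ
    · simpa using h1 ξ
    · simpa using h2 ξ
  · rintro ⟨a, b, c, rfl⟩
    have hL : ∀ ξ : V3, HasFDerivAt (fun ξ : V3 => ![2*a*ξ 0 + b, a*ξ 1 + c, a*ξ 2])
        (pi (![(2*a) • proj 0, a • proj 1, a • proj 2] : Fin 3 → (V3 →L[ℝ] ℝ))) ξ := by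
      intro ξ
      refine hasFDerivAt_pi'' ?_
      intro i
      fin_cases i
      · simp only [proj_pi, Matrix.cons_val_zero, Fin.isValue]
        exact ((hasFDerivAt_apply 0 ξ).const_mul (2*a)).add_const b
      · simp only [proj_pi, Matrix.cons_val_one, Matrix.head_cons, Fin.isValue]
        exact ((hasFDerivAt_apply 1 ξ).const_mul a).add_const c
      · simp only [proj_pi, Matrix.cons_val_two, Matrix.tail_cons, Matrix.head_cons, Fin.isValue]
        exact (hasFDerivAt_apply 2 ξ).const_mul a
    constructor
    · rw [contDiff_pi]
      intro i
      fin_cases i <;> simp <;> fun_prop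
    · intro ξ _
      constructor
      · refine ⟨-a, ?_⟩
        unfold lieBr g0
        rw [(hL ξ).fderiv]
        have hg : fderiv ℝ (fun _ : V3 => (![0, 0, 1] : V3)) ξ = 0 := fderiv_const_apply _
        rw [hg]
        funext j
        fin_cases j <;> simp
      · refine ⟨0, ?_⟩
        unfold lieBr
        rw [(hL ξ).fderiv, fderiv_fP_apply]
        funext j
        fin_cases j <;> simp [fP, g0] <;> ring
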